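/- arXiv:2603.01513 — 3 statements merged into one kernel-verified Lean document; each statement's English description precedes it below -/
import Mathlib

section
/- Let G be a connected simple graph on n ≥ 2 vertices and let A = (a_{ijk}) be its two-steps tensor. Then the representative matrix M(A) is primitive: there exists a positive integer k such that every entry of the matrix power M(A)^k is strictly positive. (Lemma 2.5) -/
/-!
Every entry `m i j` with `i ~ j` is positive (the pair `(j, i)` contributes `a i j i = 1`), and
so is every diagonal entry `m i i` as soon as `i` has a neighbour `p` (the pair `(p, i)`
contributes `a i p i = 1`); for a connected graph on at least two vertices every vertex has one.
A nonnegative matrix with positive diagonal whose support contains the edges of a connected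
graph is primitive: a walk of length `ℓ` from `i` to `j` makes `(M ^ ℓ) i j` positive, and the
positive diagonal lets one pad the exponent up to the number of vertices.
-/

open Classical in
/-- The two-steps tensor of a simple graph: `a i j k = 1` if `i ~ j` and `j ~ k`, else `0`. -/
noncomputable def twoStepsTensor {n : ℕ} (G : SimpleGraph (Fin n)) :
    Fin n → Fin n → Fin n → ℝ :=
  fun i j k => if G.Adj i j ∧ G.Adj j k then 1 else 0

/-- The representative matrix of a third-order tensor:
`m i j = ∑_{(j₂,j₃), j ∈ {j₂,j₃}} |a i j₂ j₃|`. -/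
noncomputable def repMatrix {n : ℕ} (A : Fin n → Fin n → Fin n → ℝ) :
    Matrix (Fin n) (Fin n) ℝ :=
  fun i j => ∑ p : Fin n × Fin n, if j = p.1 ∨ j = p.2 then |A i p.1 p.2| else 0

namespace Matrix

variable {ι R : Type*} [Fintype ι] [DecidableEq ι] [Ring R] [LinearOrder R]
  [IsStrictOrderedRing R] {M : Matrix ι ι R}

lemma pow_succ_apply_pos_of_pow_apply_pos (hM : ∀ i j, 0 ≤ M i j) (hdiag : ∀ i, 0 < M i i)
    {k : ℕ} {i j : ι} (h : 0 < (M ^ k) i j) : 0 < (M ^ (k + 1)) i j := by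
  rw [pow_succ, mul_apply]
  exact Finset.sum_pos' (fun l _ => mul_nonneg (pow_apply_nonneg hM k i l) (hM l j))
    ⟨j, Finset.mem_univ j, mul_pos h (hdiag j)⟩

lemma pow_length_apply_pos_of_walk {G : SimpleGraph ι} (hM : ∀ i j, 0 ≤ M i j)
    (hadj : ∀ i j, G.Adj i j → 0 < M i j) {i j : ι} (p : G.Walk i j) :
    0 < (M ^ p.length) i j := by
  induction p with
  | nil => simp
  | @cons i l j hil q ih =>
    rw [SimpleGraph.Walk.length_cons, pow_succ', mul_apply]
    exact Finset.sum_pos' (fun m _ => mul_nonneg (hM i m) (pow_apply_nonneg hM _ m j))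
      ⟨l, Finset.mem_univ l, mul_pos (hadj i l hil) ih⟩

lemma pow_apply_pos_of_walk_length_le {G : SimpleGraph ι} (hM : ∀ i j, 0 ≤ M i j)
    (hdiag : ∀ i, 0 < M i i) (hadj : ∀ i j, G.Adj i j → 0 < M i j) {i j : ι}
    (p : G.Walk i j) {k : ℕ} (hk : p.length ≤ k) : 0 < (M ^ k) i j := by
  induction k, hk using Nat.le_induction with
  | base => exact pow_length_apply_pos_of_walk hM hadj p
  | succ k _ ih => exact pow_succ_apply_pos_of_pow_apply_pos hM hdiag ih

theorem isPrimitive_of_connected {G : SimpleGraph ι} (hG : G.Connected)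
    (hM : ∀ i j, 0 ≤ M i j) (hdiag : ∀ i, 0 < M i i) (hadj : ∀ i j, G.Adj i j → 0 < M i j) :
    IsPrimitive M := by
  have : Nonempty ι := hG.nonempty
  refine ⟨hM, Fintype.card ι, Fintype.card_pos, fun i j => ?_⟩
  let p := (hG i j).some.toPath
  exact pow_apply_pos_of_walk_length_le hM hdiag hadj p.1 p.2.length_lt.le

end Matrix

section

variable {n : ℕ}

lemma repMatrix_apply_nonneg (A : Fin n → Fin n → Fin n → ℝ) (i j : Fin n) : 0 ≤ repMatrix A i j :=
  Finset.sum_nonneg fun _ _ => by positivity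

lemma repMatrix_apply_pos_of_ne_zero_fst {A : Fin n → Fin n → Fin n → ℝ} {i j k : Fin n}
    (h : A i j k ≠ 0) : 0 < repMatrix A i j :=
  Finset.sum_pos' (fun _ _ => by positivity) ⟨(j, k), Finset.mem_univ _, by simpa using h⟩

lemma repMatrix_apply_pos_of_ne_zero_snd {A : Fin n → Fin n → Fin n → ℝ} {i j k : Fin n}
    (h : A i k j ≠ 0) : 0 < repMatrix A i j :=
  Finset.sum_pos' (fun _ _ => by positivity) ⟨(k, j), Finset.mem_univ _, by simpa using h⟩

lemma twoStepsTensor_apply_of_adj {G : SimpleGraph (Fin n)} {i j k : Fin n} (hij : G.Adj i j)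
    (hjk : G.Adj j k) : twoStepsTensor G i j k = 1 := by
  simp [twoStepsTensor, hij, hjk]

lemma repMatrix_twoStepsTensor_apply_pos_of_adj {G : SimpleGraph (Fin n)} {i j : Fin n}
    (h : G.Adj i j) : 0 < repMatrix (twoStepsTensor G) i j :=
  repMatrix_apply_pos_of_ne_zero_fst (k := i) (by simp [twoStepsTensor_apply_of_adj h h.symm])

lemma repMatrix_twoStepsTensor_apply_self_pos_of_adj {G : SimpleGraph (Fin n)} {i j : Fin n}
    (h : G.Adj i j) : 0 < repMatrix (twoStepsTensor G) i i :=
  repMatrix_apply_pos_of_ne_zero_snd (k := j) (by simp [twoStepsTensor_apply_of_adj h h.symm])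

end

/-- For a connected simple graph on `n ≥ 2` vertices, the representative matrix of its
two-steps tensor is primitive. -/
theorem repMatrix_twoStepsTensor_primitive {n : ℕ} (hn : 2 ≤ n)
    (G : SimpleGraph (Fin n)) (hG : G.Connected) :
    ∃ k : ℕ, 0 < k ∧ ∀ i j : Fin n, 0 < ((repMatrix (twoStepsTensor G)) ^ k) i j := by
  have : Nontrivial (Fin n) := Fin.nontrivial_iff_two_le.mpr hn
  have hdiag (i : Fin n) : 0 < repMatrix (twoStepsTensor G) i i :=
    have ⟨_, hi⟩ := hG.preconnected.exists_adj_of_nontrivial i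
    repMatrix_twoStepsTensor_apply_self_pos_of_adj hi
  exact (Matrix.isPrimitive_of_connected hG (repMatrix_apply_nonneg _) hdiag
    fun _ _ => repMatrix_twoStepsTensor_apply_pos_of_adj).exists_pos_pow
end

section
/- Let A = (a_{ijk}) be a third-order n-dimensional nonnegative tensor whose representative matrix M(A) is primitive (there exists k ≥ 1 with every entry of M(A)^k strictly positive). Suppose λ > 0 and x ∈ ℝⁿ is a strictly positive vector with Euclidean norm 1 satisfying ∑_{j,k=1}^n a_{ijk} x_j x_k = λ x_i² for all i. Let C_t denote the geometric capacity vectors of A. Then the normalized sequence u_t = C_t / ‖C_t‖ converges to x as t → ∞. (Theorem 4.3) -/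
/-- The geometric capacity vectors of a third-order tensor:
`C 0 = 1` and `C (t+1) i = sqrt (∑ j k, a i j k * C t j * C t k)`. -/
noncomputable def geoCap {n : ℕ} (A : Fin n → Fin n → Fin n → ℝ) : ℕ → Fin n → ℝ
  | 0 => fun _ => 1
  | t + 1 => fun i => Real.sqrt (∑ j, ∑ k, A i j k * geoCap A t j * geoCap A t k)

lemma le_of_sq_le_aux {u v : ℝ} (hu : 0 ≤ u) (hv : 0 ≤ v) (h : u^2 ≤ v^2) : u ≤ v := by
  nlinarith

lemma pow_entry_nonneg_aux {n : ℕ} {P : Matrix (Fin n) (Fin n) ℝ}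
    (hP : ∀ i j, 0 ≤ P i j) : ∀ (s : ℕ) (i j : Fin n), 0 ≤ (P^s) i j := by
  intro s
  induction s with
  | zero => intro i j; simp [Matrix.one_apply]; split <;> norm_num
  | succ s ih =>
      intro i j
      rw [pow_succ', Matrix.mul_apply]
      exact Finset.sum_nonneg fun l _ => mul_nonneg (hP i l) (ih l j)

lemma repMatrix_dot_le_aux {n : ℕ} (A : Fin n → Fin n → Fin n → ℝ)
    (hA : ∀ i j k, 0 ≤ A i j k) (Q : Fin n → ℝ) (hQ : ∀ l, 0 ≤ Q l) (i : Fin n) :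
    ∑ l, repMatrix A i l * Q l ≤ ∑ j, ∑ k, A i j k * (Q j + Q k) := by
  have h1 : ∑ l, repMatrix A i l * Q l
      = ∑ p : Fin n × Fin n, ∑ l, (if l = p.1 ∨ l = p.2 then |A i p.1 p.2| * Q l else 0) := by
    unfold repMatrix
    rw [Finset.sum_comm]
    refine Finset.sum_congr rfl fun l _ => ?_
    rw [Finset.sum_mul]
    exact Finset.sum_congr rfl fun p _ => by split <;> simp
  rw [h1, show (∑ j, ∑ k, A i j k * (Q j + Q k))
      = ∑ p : Fin n × Fin n, A i p.1 p.2 * (Q p.1 + Q p.2) from by rw [Fintype.sum_prod_type]]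
  apply Finset.sum_le_sum
  intro p _
  have habs : |A i p.1 p.2| = A i p.1 p.2 := abs_of_nonneg (hA _ _ _)
  calc ∑ l, (if l = p.1 ∨ l = p.2 then |A i p.1 p.2| * Q l else 0)
      ≤ ∑ l, ((if l = p.1 then A i p.1 p.2 * Q l else 0)
            + (if l = p.2 then A i p.1 p.2 * Q l else 0)) := by
        refine Finset.sum_le_sum fun l _ => ?_
        rw [habs]
        have := mul_nonneg (hA i p.1 p.2) (hQ l)
        by_cases h1 : l = p.1 <;> by_cases h2 : l = p.2 <;>
          simp [h1, h2] <;> split_ifs <;> simp_all <;> linarith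
    _ = A i p.1 p.2 * (Q p.1 + Q p.2) := by
        rw [Finset.sum_add_distrib, Finset.sum_ite_eq', Finset.sum_ite_eq']
        simp [mul_add]


set_option maxHeartbeats 2000000 in
/-- If `A` is a nonnegative tensor with primitive representative matrix and `(λ, x)` is a
positive eigenpair with `‖x‖ = 1`, then the normalized geometric capacity vectors
converge to `x`. -/
theorem geoCap_normalized_tendsto {n : ℕ} (A : Fin n → Fin n → Fin n → ℝ)
    (hA : ∀ i j k, 0 ≤ A i j k)
    (hprim : ∃ k : ℕ, 0 < k ∧ ∀ i j : Fin n, 0 < ((repMatrix A) ^ k) i j)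
    (lam : ℝ) (hlam : 0 < lam)
    (x : EuclideanSpace ℝ (Fin n)) (hx : ∀ i, 0 < x i) (hxnorm : ‖x‖ = 1)
    (heig : ∀ i, ∑ j, ∑ k, A i j k * x j * x k = lam * (x i) ^ 2) :
    Filter.Tendsto
      (fun t => (‖(WithLp.equiv 2 (Fin n → ℝ)).symm (geoCap A t)‖)⁻¹ •
        (WithLp.equiv 2 (Fin n → ℝ)).symm (geoCap A t))
      Filter.atTop (nhds x) := by
  classical
  obtain ⟨k, hkpos, hPk⟩ := hprim
  have hne : Nonempty (Fin n) := by
    rcases Nat.eq_zero_or_pos n with h | h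
    · exfalso
      subst h
      rw [EuclideanSpace.norm_eq] at hxnorm
      simp at hxnorm
    · exact ⟨⟨0, h⟩⟩
  have hune : (Finset.univ : Finset (Fin n)).Nonempty := Finset.univ_nonempty
  set C : ℕ → Fin n → ℝ := geoCap A with hCdef
  have hCsucc : ∀ t i, C (t+1) i = Real.sqrt (∑ j, ∑ k, A i j k * C t j * C t k) :=
    fun t i => rfl
  have hC0 : ∀ i, C 0 i = 1 := fun i => rfl
  set μ : ℝ := Finset.univ.inf' hune (fun i => x i) with hμdef
  set X : ℝ := Finset.univ.sup' hune (fun i => x i) with hXdef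
  have hμle : ∀ i, μ ≤ x i := fun i => Finset.inf'_le _ (Finset.mem_univ i)
  have hleX : ∀ i, x i ≤ X := fun i => Finset.le_sup' _ (Finset.mem_univ i)
  have hμpos : 0 < μ := by
    obtain ⟨i, _, hi⟩ := Finset.exists_mem_eq_inf' hune (fun i => x i)
    rw [hμdef, hi]; exact hx i
  have hXpos : 0 < X := lt_of_lt_of_le hμpos ((hμle (Classical.arbitrary _)).trans
    (hleX (Classical.arbitrary _)))
  have hsl : 0 < Real.sqrt lam := Real.sqrt_pos.2 hlam
  -- one-step comparison lemma
  have hstep : ∀ (a b : ℝ) (t : ℕ), 0 ≤ a →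
      (∀ j, a * x j ≤ C t j ∧ C t j ≤ b * x j) →
      (∀ i, a * Real.sqrt lam * x i ≤ C (t+1) i ∧ C (t+1) i ≤ b * Real.sqrt lam * x i) := by
    intro a b t ha hbnd i
    have hClo : ∀ j, 0 ≤ C t j :=
      fun j => le_trans (mul_nonneg ha (hx j).le) (hbnd j).1
    have hb : 0 ≤ b := by
      have j := Classical.arbitrary (Fin n)
      nlinarith [(hbnd j).1, (hbnd j).2, hx j, mul_nonneg ha (hx j).le]
    have hSlo : a^2 * lam * (x i)^2 ≤ ∑ j, ∑ k, A i j k * C t j * C t k := by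
      have e1 : a^2 * lam * (x i)^2 = ∑ j, ∑ k, A i j k * (a * x j) * (a * x k) := by
        rw [show (∑ j, ∑ k, A i j k * (a * x j) * (a * x k))
            = a^2 * ∑ j, ∑ k, A i j k * x j * x k from by
          simp only [Finset.mul_sum]
          exact Finset.sum_congr rfl fun j _ => Finset.sum_congr rfl fun k _ => by ring]
        rw [heig i]; ring
      rw [e1]
      refine Finset.sum_le_sum fun j _ => Finset.sum_le_sum fun kk _ => ?_
      have h1 : (a * x j) * (a * x kk) ≤ C t j * C t kk :=
        mul_le_mul (hbnd j).1 (hbnd kk).1 (mul_nonneg ha (hx kk).le) (hClo j)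
      calc A i j kk * (a * x j) * (a * x kk) = A i j kk * ((a * x j) * (a * x kk)) := by ring
        _ ≤ A i j kk * (C t j * C t kk) := mul_le_mul_of_nonneg_left h1 (hA i j kk)
        _ = A i j kk * C t j * C t kk := by ring
    have hSup : (∑ j, ∑ k, A i j k * C t j * C t k) ≤ b^2 * lam * (x i)^2 := by
      have e1 : b^2 * lam * (x i)^2 = ∑ j, ∑ k, A i j k * (b * x j) * (b * x k) := by
        rw [show (∑ j, ∑ k, A i j k * (b * x j) * (b * x k))
            = b^2 * ∑ j, ∑ k, A i j k * x j * x k from by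
          simp only [Finset.mul_sum]
          exact Finset.sum_congr rfl fun j _ => Finset.sum_congr rfl fun k _ => by ring]
        rw [heig i]; ring
      rw [e1]
      refine Finset.sum_le_sum fun j _ => Finset.sum_le_sum fun kk _ => ?_
      have h1 : C t j * C t kk ≤ (b * x j) * (b * x kk) :=
        mul_le_mul (hbnd j).2 (hbnd kk).2 (hClo kk) (mul_nonneg hb (hx j).le)
      calc A i j kk * C t j * C t kk = A i j kk * (C t j * C t kk) := by ring
        _ ≤ A i j kk * ((b * x j) * (b * x kk)) := mul_le_mul_of_nonneg_left h1 (hA i j kk)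
        _ = A i j kk * (b * x j) * (b * x kk) := by ring
    have hSnn : 0 ≤ ∑ j, ∑ k, A i j k * C t j * C t k :=
      le_trans (by positivity) hSlo
    constructor
    · rw [hCsucc]
      refine (Real.le_sqrt (mul_nonneg (mul_nonneg ha hsl.le) (hx i).le) hSnn).2 ?_
      nlinarith [Real.sq_sqrt hlam.le, hSlo]
    · rw [hCsucc]
      have e2 : (b * Real.sqrt lam * x i)^2 = b^2 * lam * (x i)^2 := by
        rw [mul_pow, mul_pow, Real.sq_sqrt hlam.le]
      calc Real.sqrt (∑ j, ∑ k, A i j k * C t j * C t k)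
          ≤ Real.sqrt (b^2 * lam * (x i)^2) := Real.sqrt_le_sqrt hSup
        _ = b * Real.sqrt lam * x i := by
            rw [← e2]; exact Real.sqrt_sq (mul_nonneg (mul_nonneg hb hsl.le) (hx i).le)
  -- global positivity
  have hglob : ∀ t j, X⁻¹ * (Real.sqrt lam)^t * x j ≤ C t j ∧
      C t j ≤ μ⁻¹ * (Real.sqrt lam)^t * x j := by
    intro t
    induction t with
    | zero =>
        intro j
        rw [hC0]
        constructor
        · rw [pow_zero, mul_one, inv_mul_le_iff₀ hXpos, mul_one]; exact hleX j
        · rw [pow_zero, mul_one, inv_mul_eq_div, le_div_iff₀ hμpos, one_mul]; exact hμle j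
    | succ t ih =>
        have h := hstep (X⁻¹ * (Real.sqrt lam)^t) (μ⁻¹ * (Real.sqrt lam)^t) t
          (by positivity) ih
        intro j
        rw [pow_succ]
        constructor
        · calc X⁻¹ * ((Real.sqrt lam)^t * Real.sqrt lam) * x j
              = X⁻¹ * (Real.sqrt lam)^t * Real.sqrt lam * x j := by ring
            _ ≤ C (t+1) j := (h j).1
        · calc C (t+1) j ≤ μ⁻¹ * (Real.sqrt lam)^t * Real.sqrt lam * x j := (h j).2
            _ = μ⁻¹ * ((Real.sqrt lam)^t * Real.sqrt lam) * x j := by ring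
  have hCpos : ∀ t j, 0 < C t j :=
    fun t j => lt_of_lt_of_le (mul_pos (mul_pos (inv_pos.2 hXpos) (pow_pos hsl t)) (hx j)) (hglob t j).1
  set p : ℕ → ℝ := fun t => Finset.univ.inf' hune (fun i => C t i / x i) with hpdef
  set q : ℕ → ℝ := fun t => Finset.univ.sup' hune (fun i => C t i / x i) with hqdef
  have hple : ∀ t i, p t * x i ≤ C t i := by
    intro t i
    have h : p t ≤ C t i / x i := Finset.inf'_le _ (Finset.mem_univ i)
    rw [← le_div_iff₀ (hx i)]
    exact h
  have hqge : ∀ t i, C t i ≤ q t * x i := by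
    intro t i
    have h : C t i / x i ≤ q t := Finset.le_sup' (fun i => C t i / x i) (Finset.mem_univ i)
    rw [← div_le_iff₀ (hx i)]
    exact h
  have hppos : ∀ t, 0 < p t := by
    intro t
    obtain ⟨i, _, hi⟩ := Finset.exists_mem_eq_inf' hune (fun i => C t i / x i)
    rw [hpdef]
    simp only []
    rw [hi]
    exact div_pos (hCpos t i) (hx i)
  have hpq : ∀ t, p t ≤ q t := by
    intro t
    have i := Classical.arbitrary (Fin n)
    exact le_trans (Finset.inf'_le _ (Finset.mem_univ i)) (Finset.le_sup' (fun i => C t i / x i) (Finset.mem_univ i))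
  have hqpos : ∀ t, 0 < q t := fun t => lt_of_lt_of_le (hppos t) (hpq t)
  set g : ℕ → ℝ := fun t => q t / p t with hgdef
  have hg1 : ∀ t, 1 ≤ g t := fun t => (one_le_div (hppos t)).2 (hpq t)
  have hgpos : ∀ t, 0 < g t := fun t => lt_of_lt_of_le one_pos (hg1 t)
  -- bounds at offset s
  have hlow : ∀ t s j, p t * (Real.sqrt lam)^s * x j ≤ C (t+s) j ∧
      C (t+s) j ≤ q t * (Real.sqrt lam)^s * x j := by
    intro t s
    induction s with
    | zero =>
        intro j
        rw [pow_zero]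
        simpa using ⟨hple t j, hqge t j⟩
    | succ s ih =>
        have h := hstep (p t * (Real.sqrt lam)^s) (q t * (Real.sqrt lam)^s) (t+s)
          (mul_nonneg (hppos t).le (pow_nonneg hsl.le s)) ih
        intro j
        rw [show t + (s+1) = (t+s) + 1 from rfl, pow_succ]
        constructor
        · calc p t * ((Real.sqrt lam)^s * Real.sqrt lam) * x j
              = p t * (Real.sqrt lam)^s * Real.sqrt lam * x j := by ring
            _ ≤ C ((t+s)+1) j := (h j).1
        · calc C ((t+s)+1) j ≤ q t * (Real.sqrt lam)^s * Real.sqrt lam * x j := (h j).2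
            _ = q t * ((Real.sqrt lam)^s * Real.sqrt lam) * x j := by ring
  have hpmono : ∀ t s, p t * (Real.sqrt lam)^s ≤ p (t+s) := by
    intro t s
    apply Finset.le_inf'
    intro i _
    rw [le_div_iff₀ (hx i)]
    exact (hlow t s i).1
  have hqmono : ∀ t s, q (t+s) ≤ q t * (Real.sqrt lam)^s := by
    intro t s
    apply Finset.sup'_le
    intro i _
    rw [div_le_iff₀ (hx i)]
    exact (hlow t s i).2
  have hgmono : ∀ t s, g (t+s) ≤ g t := by
    intro t s
    have h1 : q (t+s) / p (t+s) ≤ (q t * (Real.sqrt lam)^s) / (p t * (Real.sqrt lam)^s) :=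
      div_le_div₀ (mul_nonneg (hqpos t).le (pow_nonneg hsl.le s)) (hqmono t s)
        (mul_pos (hppos t) (pow_pos hsl s)) (hpmono t s)
    rw [mul_div_mul_right _ _ (by positivity : ((Real.sqrt lam)^s : ℝ) ≠ 0)] at h1
    exact h1
  -- representative matrix facts
  have hPnn : ∀ i j, 0 ≤ repMatrix A i j := by
    intro i j
    refine Finset.sum_nonneg fun pr _ => ?_
    split
    · exact abs_nonneg _
    · exact le_rfl
  have hPsnn : ∀ s (i j : Fin n), 0 ≤ ((repMatrix A)^s) i j := pow_entry_nonneg_aux hPnn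
  obtain ⟨ij0, _, hij0⟩ := Finset.exists_mem_eq_inf' (Finset.univ_nonempty)
    (fun ij : Fin n × Fin n => ((repMatrix A)^k) ij.1 ij.2)
  set π : ℝ := Finset.univ.inf' Finset.univ_nonempty
    (fun ij : Fin n × Fin n => ((repMatrix A)^k) ij.1 ij.2) with hπdef
  have hπpos : 0 < π := by rw [hij0]; exact hPk ij0.1 ij0.2
  have hπle : ∀ i j, π ≤ ((repMatrix A)^k) i j := fun i j =>
    Finset.inf'_le (fun ij : Fin n × Fin n => ((repMatrix A)^k) ij.1 ij.2)
      (Finset.mem_univ (i, j))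
  set c : ℝ := μ^2 / (4 * lam * X^2) with hcdef
  have hcpos : 0 < c :=
    div_pos (pow_pos hμpos 2) (mul_pos (mul_pos four_pos hlam) (pow_pos hXpos 2))
  set θ : ℝ := min (c^k * π) 1 with hθdef
  have hθpos : 0 < θ := lt_min (mul_pos (pow_pos hcpos k) hπpos) one_pos
  have hθ1 : θ ≤ 1 := min_le_right _ _
  have hsqlam : ∀ s : ℕ, ((Real.sqrt lam)^s)^2 = lam^s := by
    intro s
    rw [← pow_mul, mul_comm, pow_mul, Real.sq_sqrt hlam.le]
  have hkey : ∀ t, g (t+k) ^ 2 - 1 ≤ (1 - θ) * (g t ^ 2 - 1) := by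
    intro t
    obtain ⟨j0, _, hj0⟩ := Finset.exists_mem_eq_inf' hune (fun i => C t i / x i)
    have hj0' : C t j0 = p t * x j0 := by
      have h : p t = C t j0 / x j0 := hj0
      rw [h, div_mul_cancel₀ _ (ne_of_gt (hx j0))]
    have hq_eq : q t = p t * g t := by
      rw [show g t = q t / p t from rfl, mul_comm, div_mul_cancel₀ _ (ne_of_gt (hppos t))]
    have hG1 : (0:ℝ) ≤ (g t)^2 - 1 := by nlinarith [hg1 t]
    -- the main induction
    have hind : ∀ s i, C (t+s) i ^ 2
        ≤ (p t)^2 * lam^s * ((g t)^2 - ((g t)^2 - 1) * c^s * (((repMatrix A)^s) i j0)) * (x i)^2 := by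
      intro s
      induction s with
      | zero =>
          intro i
          by_cases hij : i = j0
          · subst hij
            have h0 : ((repMatrix A)^0) i i = (1:ℝ) := by simp [Matrix.one_apply]
            rw [show t + 0 = t from rfl, h0, hj0']
            simp only [pow_zero]
            apply le_of_eq
            ring
          · have h0 : ((repMatrix A)^0) i j0 = (0:ℝ) := by simp [Matrix.one_apply, hij]
            rw [show t + 0 = t from rfl, h0]
            have h1 : C t i ^ 2 ≤ (q t * x i)^2 := pow_le_pow_left₀ (hCpos t i).le (hqge t i) 2
            have h2 : (q t * x i)^2 = p t^2 * (g t)^2 * x i^2 := by rw [hq_eq]; ring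
            simp only [pow_zero]
            nlinarith [h1, h2]
      | succ s ih =>
          intro i
          have hSnn : 0 ≤ ∑ j, ∑ kk, A i j kk * C (t+s) j * C (t+s) kk :=
            Finset.sum_nonneg fun j _ => Finset.sum_nonneg fun kk _ =>
              mul_nonneg (mul_nonneg (hA i j kk) (hCpos (t+s) j).le) (hCpos (t+s) kk).le
          have hCsq : C (t+(s+1)) i ^ 2 = ∑ j, ∑ kk, A i j kk * C (t+s) j * C (t+s) kk := by
            rw [show t+(s+1) = (t+s)+1 from rfl, hCsucc]
            exact Real.sq_sqrt hSnn
          have hupper2 : ∀ j, C (t+s) j ^2 ≤ (p t)^2 * lam^s * (g t)^2 * x j^2 := by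
            intro j
            have h2 : C (t+s) j ^2 ≤ (q t * (Real.sqrt lam)^s * x j)^2 :=
              pow_le_pow_left₀ (hCpos _ _).le (hlow t s j).2 2
            calc C (t+s) j ^2 ≤ (q t * (Real.sqrt lam)^s * x j)^2 := h2
              _ = q t^2 * ((Real.sqrt lam)^s)^2 * x j^2 := by ring
              _ = (p t)^2 * lam^s * (g t)^2 * x j^2 := by rw [hsqlam s, hq_eq]; ring
          have hGd : ∀ j, 0 ≤ (g t)^2 - ((g t)^2-1) * c^s * (((repMatrix A)^s) j j0) := by
            intro j
            nlinarith [ih j, pow_pos (hCpos (t+s) j) 2,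
              mul_pos (mul_pos (pow_pos (hppos t) 2) (pow_pos hlam s)) (pow_pos (hx j) 2)]
          have hterm : ∀ j kk, A i j kk * C (t+s) j * C (t+s) kk ≤
              ((p t)^2 * lam^s * (g t)^2) * (A i j kk * x j * x kk)
              - ((p t)^2 * lam^s * ((g t)^2-1) * c^s * μ^2 / 4)
                * (A i j kk * (((repMatrix A)^s) j j0 + ((repMatrix A)^s) kk j0)) := by
            intro j kk
            have hDj : 0 ≤ ((repMatrix A)^s) j j0 := hPsnn s j j0
            have hDk : 0 ≤ ((repMatrix A)^s) kk j0 := hPsnn s kk j0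
            have hd : 0 ≤ ((g t)^2-1) * c^s := mul_nonneg hG1 (pow_nonneg hcpos.le s)
            have hB2 : 0 < (p t)^2 * lam^s := mul_pos (pow_pos (hppos t) 2) (pow_pos hlam s)
            -- claim 1
            have hclaim : ∀ j kk, C (t+s) j * C (t+s) kk ≤
                ((p t)^2 * lam^s) * x j * x kk
                  * ((g t)^2 - ((g t)^2-1) * c^s * (((repMatrix A)^s) j j0) / 2) := by
              intro j kk
              have hDj : 0 ≤ ((repMatrix A)^s) j j0 := hPsnn s j j0
              have hprod : C (t+s) j ^2 * C (t+s) kk ^2 ≤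
                  ((p t)^2 * lam^s * ((g t)^2 - ((g t)^2-1) * c^s * (((repMatrix A)^s) j j0)) * x j^2)
                  * ((p t)^2 * lam^s * (g t)^2 * x kk^2) :=
                mul_le_mul (ih j) (hupper2 kk) (pow_nonneg (hCpos _ _).le 2)
                  (mul_nonneg (mul_nonneg hB2.le (hGd j)) (sq_nonneg (x j)))
              have hrhsnn : 0 ≤ ((p t)^2 * lam^s) * x j * x kk
                  * ((g t)^2 - ((g t)^2-1) * c^s * (((repMatrix A)^s) j j0) / 2) := by
                have h5 : 0 ≤ (g t)^2 - ((g t)^2-1) * c^s * (((repMatrix A)^s) j j0) / 2 := by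
                  nlinarith [hGd j, mul_nonneg (mul_nonneg hG1 (pow_nonneg hcpos.le s)) hDj]
                have h6 : 0 ≤ ((p t)^2 * lam^s) * x j * x kk :=
                  mul_nonneg (mul_nonneg hB2.le (hx j).le) (hx kk).le
                exact mul_nonneg h6 h5
              refine le_of_sq_le_aux
                (mul_nonneg (hCpos _ _).le (hCpos _ _).le) hrhsnn ?_
              have hexp : (C (t+s) j * C (t+s) kk)^2 = C (t+s) j ^2 * C (t+s) kk ^2 := by ring
              rw [hexp]
              nlinarith [hprod, sq_nonneg ((p t)^2 * lam^s * x j * x kk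
                * (((g t)^2-1) * c^s * (((repMatrix A)^s) j j0) / 2))]
            have hc1 := hclaim j kk
            have hc2 := hclaim kk j
            rw [show C (t+s) kk * C (t+s) j = C (t+s) j * C (t+s) kk from mul_comm _ _] at hc2
            have hcomb : C (t+s) j * C (t+s) kk ≤
                ((p t)^2 * lam^s) * x j * x kk
                  * ((g t)^2 - ((g t)^2-1) * c^s
                      * (((repMatrix A)^s) j j0 + ((repMatrix A)^s) kk j0) / 4) := by
              nlinarith [hc1, hc2, mul_nonneg (mul_nonneg hB2.le (hx j).le) (hx kk).le,
                mul_nonneg (mul_nonneg (hx j).le (hx kk).le) hB2.le]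
            have hμ2 : μ^2 ≤ x j * x kk := by nlinarith [hμle j, hμle kk, hμpos, hx j, hx kk]
            have hAC : A i j kk * (C (t+s) j * C (t+s) kk) ≤
                A i j kk * (((p t)^2 * lam^s) * x j * x kk
                  * ((g t)^2 - ((g t)^2-1) * c^s
                      * (((repMatrix A)^s) j j0 + ((repMatrix A)^s) kk j0) / 4)) :=
              mul_le_mul_of_nonneg_left hcomb (hA i j kk)
            have hfin2 : A i j kk * (((p t)^2 * lam^s) * x j * x kk
                  * ((g t)^2 - ((g t)^2-1) * c^s
                      * (((repMatrix A)^s) j j0 + ((repMatrix A)^s) kk j0) / 4))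
                ≤ ((p t)^2 * lam^s * (g t)^2) * (A i j kk * x j * x kk)
                  - ((p t)^2 * lam^s * ((g t)^2-1) * c^s * μ^2 / 4)
                    * (A i j kk * (((repMatrix A)^s) j j0 + ((repMatrix A)^s) kk j0)) := by
              have hDsum : 0 ≤ ((repMatrix A)^s) j j0 + ((repMatrix A)^s) kk j0 :=
                add_nonneg hDj hDk
              nlinarith [mul_le_mul_of_nonneg_left hμ2
                  (mul_nonneg (mul_nonneg (mul_nonneg hB2.le hd) hDsum) (hA i j kk))]
            calc A i j kk * C (t+s) j * C (t+s) kk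
                = A i j kk * (C (t+s) j * C (t+s) kk) := by ring
              _ ≤ _ := le_trans hAC hfin2
          -- sum up
          have hsum : ∑ j, ∑ kk, A i j kk * C (t+s) j * C (t+s) kk ≤
              ((p t)^2 * lam^s * (g t)^2) * (lam * x i^2)
              - ((p t)^2 * lam^s * ((g t)^2-1) * c^s * μ^2 / 4)
                * (∑ j, ∑ kk, A i j kk * (((repMatrix A)^s) j j0 + ((repMatrix A)^s) kk j0)) := by
            calc ∑ j, ∑ kk, A i j kk * C (t+s) j * C (t+s) kk
                ≤ ∑ j, ∑ kk, (((p t)^2 * lam^s * (g t)^2) * (A i j kk * x j * x kk)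
                  - ((p t)^2 * lam^s * ((g t)^2-1) * c^s * μ^2 / 4)
                    * (A i j kk * (((repMatrix A)^s) j j0 + ((repMatrix A)^s) kk j0))) :=
                  Finset.sum_le_sum fun j _ => Finset.sum_le_sum fun kk _ => hterm j kk
              _ = ((p t)^2 * lam^s * (g t)^2) * (∑ j, ∑ kk, A i j kk * x j * x kk)
                  - ((p t)^2 * lam^s * ((g t)^2-1) * c^s * μ^2 / 4)
                    * (∑ j, ∑ kk, A i j kk * (((repMatrix A)^s) j j0 + ((repMatrix A)^s) kk j0)) := by
                  simp only [Finset.sum_sub_distrib, ← Finset.mul_sum]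
              _ = _ := by rw [heig i]
          have hdot : ((repMatrix A)^(s+1)) i j0 ≤
              ∑ j, ∑ kk, A i j kk * (((repMatrix A)^s) j j0 + ((repMatrix A)^s) kk j0) := by
            have h1 : ((repMatrix A)^(s+1)) i j0 = ∑ l, repMatrix A i l * ((repMatrix A)^s) l j0 := by
              rw [pow_succ', Matrix.mul_apply]
            rw [h1]
            exact repMatrix_dot_le_aux A hA (fun l => ((repMatrix A)^s) l j0)
              (fun l => hPsnn s l j0) i
          have hcoef : 0 ≤ (p t)^2 * lam^s * ((g t)^2-1) * c^s * μ^2 / 4 := by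
            have := mul_pos (pow_pos (hppos t) 2) (pow_pos hlam s)
            have := pow_nonneg hcpos.le s
            positivity
          have hR : 0 ≤ ((repMatrix A)^(s+1)) i j0 := hPsnn (s+1) i j0
          have hxX : x i^2 ≤ X^2 := pow_le_pow_left₀ (hx i).le (hleX i) 2
          have hcX : lam * c * x i^2 ≤ μ^2/4 := by
            have h4 : lam * c * x i^2 = μ^2 * x i^2 / (4*X^2) := by
              rw [hcdef]; field_simp
            rw [h4, div_le_div_iff₀ (by positivity) (by norm_num)]
            nlinarith [hxX, sq_nonneg μ]
          rw [hCsq]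
          calc ∑ j, ∑ kk, A i j kk * C (t+s) j * C (t+s) kk
              ≤ ((p t)^2 * lam^s * (g t)^2) * (lam * x i^2)
                - ((p t)^2 * lam^s * ((g t)^2-1) * c^s * μ^2 / 4)
                  * (((repMatrix A)^(s+1)) i j0) :=
                le_trans hsum (by nlinarith [mul_le_mul_of_nonneg_left hdot hcoef])
            _ ≤ (p t)^2 * lam^(s+1) * ((g t)^2 - ((g t)^2-1) * c^(s+1)
                  * (((repMatrix A)^(s+1)) i j0)) * (x i)^2 := by
                rw [pow_succ lam, pow_succ c]
                nlinarith [mul_le_mul_of_nonneg_left hcX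
                  (mul_nonneg (mul_nonneg (mul_nonneg (mul_nonneg
                    (sq_nonneg (p t)) (pow_nonneg hlam.le s)) hG1)
                    (pow_nonneg hcpos.le s)) hR)]
    -- conclude contraction
    have hE1 : (1:ℝ) ≤ (g t)^2 - θ * ((g t)^2 - 1) := by nlinarith [hG1, hθ1, hθpos]
    have hE0 : (0:ℝ) ≤ (g t)^2 - θ * ((g t)^2 - 1) := le_trans zero_le_one hE1
    have hq' : q (t+k) ≤ p t * (Real.sqrt lam)^k * Real.sqrt ((g t)^2 - θ * ((g t)^2-1)) := by
      apply Finset.sup'_le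
      intro i _
      rw [div_le_iff₀ (hx i)]
      have hθR : θ ≤ c^k * (((repMatrix A)^k) i j0) := by
        refine le_trans (min_le_left _ _) ?_
        exact mul_le_mul_of_nonneg_left (hπle i j0) (pow_nonneg hcpos.le k)
      have hW : 0 ≤ (p t)^2 * lam^k * ((g t)^2-1) * x i^2 :=
        mul_nonneg (mul_nonneg (mul_nonneg (sq_nonneg (p t)) (pow_nonneg hlam.le k)) hG1)
          (sq_nonneg (x i))
      have h2 : C (t+k) i ^2 ≤ (p t)^2 * lam^k * ((g t)^2 - θ*((g t)^2-1)) * x i^2 := by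
        nlinarith [hind k i, mul_le_mul_of_nonneg_left hθR hW]
      refine le_of_sq_le_aux (hCpos _ _).le
        (mul_nonneg (mul_nonneg (mul_nonneg (hppos t).le (pow_nonneg hsl.le k))
          (Real.sqrt_nonneg _)) (hx i).le) ?_
      calc C (t+k) i ^2 ≤ (p t)^2 * lam^k * ((g t)^2 - θ*((g t)^2-1)) * x i^2 := h2
        _ = (p t * (Real.sqrt lam)^k * Real.sqrt ((g t)^2 - θ * ((g t)^2-1)) * x i)^2 := by
            rw [mul_pow, mul_pow, mul_pow, hsqlam k, Real.sq_sqrt hE0]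
    have hp' : p t * (Real.sqrt lam)^k ≤ p (t+k) := hpmono t k
    have hgk : g (t+k) ≤ Real.sqrt ((g t)^2 - θ * ((g t)^2-1)) := by
      have h1 : q (t+k) / p (t+k)
          ≤ (p t * (Real.sqrt lam)^k * Real.sqrt ((g t)^2 - θ * ((g t)^2-1)))
            / (p t * (Real.sqrt lam)^k) :=
        div_le_div₀ (mul_nonneg (mul_nonneg (hppos t).le (pow_nonneg hsl.le k))
          (Real.sqrt_nonneg _)) hq' (mul_pos (hppos t) (pow_pos hsl k)) hp'
      rw [mul_div_cancel_left₀ _ (ne_of_gt (mul_pos (hppos t) (pow_pos hsl k)))] at h1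
      exact h1
    have hsq : g (t+k)^2 ≤ (g t)^2 - θ * ((g t)^2-1) := by
      have := pow_le_pow_left₀ (hgpos (t+k)).le hgk 2
      rwa [Real.sq_sqrt hE0] at this
    nlinarith [hsq]
  have hqg : ∀ t, q t = p t * g t := fun t => by
    rw [show g t = q t / p t from rfl, mul_comm, div_mul_cancel₀ _ (ne_of_gt (hppos t))]
  -- g tends to 1
  have hGmono : ∀ t s, g (t+s) ^2 - 1 ≤ g t ^2 - 1 := by
    intro t s
    nlinarith [hgmono t s, hg1 (t+s), hg1 t]
  have hGk : ∀ m : ℕ, g (m*k) ^2 - 1 ≤ (1-θ)^m * (g 0 ^2 - 1) := by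
    intro m
    induction m with
    | zero => simp
    | succ m ih =>
        have h1 : g ((m+1)*k) ^2 - 1 ≤ (1-θ) * (g (m*k) ^2 - 1) := by
          rw [show (m+1)*k = m*k + k from by ring]
          exact hkey (m*k)
        have h2 : (1-θ) * (g (m*k)^2 -1) ≤ (1-θ) * ((1-θ)^m * (g 0^2-1)) :=
          mul_le_mul_of_nonneg_left ih (by linarith)
        calc g ((m+1)*k)^2 - 1 ≤ (1-θ)*(g (m*k)^2-1) := h1
          _ ≤ (1-θ)*((1-θ)^m*(g 0^2-1)) := h2
          _ = (1-θ)^(m+1)*(g 0^2-1) := by ring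
  have hGbound : ∀ t, g t ^2 - 1 ≤ (1-θ)^(t/k) * (g 0^2-1) := by
    intro t
    have h1 : (t/k)*k ≤ t := Nat.div_mul_le_self t k
    have h2 : g t ^2 - 1 ≤ g ((t/k)*k) ^2 - 1 := by
      have h3 := hGmono ((t/k)*k) (t - (t/k)*k)
      rwa [Nat.add_sub_cancel' h1] at h3
    exact le_trans h2 (hGk (t/k))
  have hdiv : Filter.Tendsto (fun t : ℕ => t / k) Filter.atTop Filter.atTop := by
    apply Filter.tendsto_atTop_atTop.2
    intro b
    exact ⟨b*k, fun t ht => (Nat.le_div_iff_mul_le hkpos).2 ht⟩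
  have hpowlim : Filter.Tendsto (fun m : ℕ => (1-θ)^m * (g 0^2-1)) Filter.atTop (nhds 0) := by
    have h0 : Filter.Tendsto (fun m : ℕ => (1-θ)^m) Filter.atTop (nhds 0) :=
      tendsto_pow_atTop_nhds_zero_of_lt_one (by linarith) (by linarith)
    simpa using h0.mul_const (g 0^2-1)
  have hGlim : Filter.Tendsto (fun t => g t ^2 - 1) Filter.atTop (nhds 0) :=
    squeeze_zero (fun t => by nlinarith [hg1 t]) hGbound (hpowlim.comp hdiv)
  have hglim1 : Filter.Tendsto (fun t => g t - 1) Filter.atTop (nhds 0) :=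
    squeeze_zero (fun t => by linarith [hg1 t]) (fun t => by nlinarith [hg1 t]) hGlim
  -- norm facts
  have hxsum : ∑ i, x i ^ 2 = 1 := by
    have h := hxnorm
    rw [EuclideanSpace.norm_eq] at h
    have h2 : ∑ i, ‖x i‖^2 = 1 := by
      have h3 := congrArg (fun y : ℝ => y^2) h
      simp only [] at h3
      rwa [Real.sq_sqrt (Finset.sum_nonneg fun i _ => sq_nonneg (‖x i‖)), one_pow] at h3
    have h4 : ∀ i : Fin n, ‖x i‖^2 = x i ^2 := fun i => by rw [Real.norm_eq_abs, sq_abs]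
    rw [← h2]
    exact Finset.sum_congr rfl fun i _ => (h4 i).symm
  set V : ℕ → EuclideanSpace ℝ (Fin n) :=
    fun t => (WithLp.equiv 2 (Fin n → ℝ)).symm (C t) with hVdef
  have hV : ∀ t, (WithLp.equiv 2 (Fin n → ℝ)).symm (C t) = V t := fun t => rfl
  have hVapp : ∀ t i, V t i = C t i := fun t i => rfl
  have hVnorm : ∀ t, ‖V t‖ = Real.sqrt (∑ i, C t i ^2) := by
    intro t
    rw [EuclideanSpace.norm_eq]
    congr 1
    exact Finset.sum_congr rfl fun i _ => by rw [hVapp, Real.norm_eq_abs, sq_abs]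
  have hNlo : ∀ t, p t ≤ ‖V t‖ := by
    intro t
    rw [hVnorm]
    have h1 : (p t)^2 ≤ ∑ i, C t i ^2 := by
      have h0 : (p t)^2 = ∑ i, (p t)^2 * x i ^2 := by rw [← Finset.mul_sum, hxsum, mul_one]
      rw [h0]
      refine Finset.sum_le_sum fun i _ => ?_
      nlinarith [hple t i, mul_nonneg (hppos t).le (hx i).le]
    have h2 := Real.sqrt_le_sqrt h1
    rwa [Real.sqrt_sq (hppos t).le] at h2
  have hNhi : ∀ t, ‖V t‖ ≤ q t := by
    intro t
    rw [hVnorm]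
    have h1 : ∑ i, C t i ^2 ≤ (q t)^2 := by
      have h0 : (q t)^2 = ∑ i, (q t)^2 * x i ^2 := by rw [← Finset.mul_sum, hxsum, mul_one]
      rw [h0]
      refine Finset.sum_le_sum fun i _ => ?_
      nlinarith [hqge t i, (hCpos t i).le]
    have h2 := Real.sqrt_le_sqrt h1
    rwa [Real.sqrt_sq (hqpos t).le] at h2
  have hVpos : ∀ t, 0 < ‖V t‖ := fun t => lt_of_lt_of_le (hppos t) (hNlo t)
  -- coordinatewise bound
  have hcoord : ∀ t i, |(‖V t‖⁻¹ • V t - x) i| ≤ (g t - 1) * x i := by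
    intro t i
    have hN := hVpos t
    have happ : (‖V t‖⁻¹ • V t - x) i = C t i / ‖V t‖ - x i := by
      rw [PiLp.sub_apply, PiLp.smul_apply, hVapp, smul_eq_mul, inv_mul_eq_div]
    rw [happ]
    have h1 : C t i / ‖V t‖ ≤ g t * x i := by
      rw [div_le_iff₀ hN]
      calc C t i ≤ q t * x i := hqge t i
        _ = (p t * x i) * g t := by rw [hqg t]; ring
        _ ≤ (‖V t‖ * x i) * g t :=
            mul_le_mul_of_nonneg_right
              (mul_le_mul_of_nonneg_right (hNlo t) (hx i).le) (hgpos t).le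
        _ = g t * x i * ‖V t‖ := by ring
    have h2 : x i / g t ≤ C t i / ‖V t‖ := by
      rw [div_le_div_iff₀ (hgpos t) hN]
      calc x i * ‖V t‖ ≤ x i * q t := mul_le_mul_of_nonneg_left (hNhi t) (hx i).le
        _ = (p t * x i) * g t := by rw [hqg t]; ring
        _ ≤ C t i * g t := mul_le_mul_of_nonneg_right (hple t i) (hgpos t).le
    have h3 : x i - (g t - 1) * x i ≤ x i / g t := by
      rw [le_div_iff₀ (hgpos t)]
      nlinarith [hx i, sq_nonneg (g t - 1)]
    rw [abs_le]
    constructor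
    · linarith
    · linarith
  -- final convergence
  simp only [hV]
  rw [tendsto_iff_norm_sub_tendsto_zero]
  refine squeeze_zero (fun t => norm_nonneg _) (g := fun t => g t - 1) ?_ ?_
  · intro t
    rw [EuclideanSpace.norm_eq]
    have hb : ∀ i : Fin n, ‖(‖V t‖⁻¹ • V t - x) i‖^2 ≤ (g t - 1)^2 * x i^2 := by
      intro i
      have h := hcoord t i
      rw [Real.norm_eq_abs, sq_abs]
      nlinarith [abs_nonneg ((‖V t‖⁻¹ • V t - x) i), neg_abs_le ((‖V t‖⁻¹ • V t - x) i),
        le_abs_self ((‖V t‖⁻¹ • V t - x) i), mul_nonneg (by linarith [hg1 t] : (0:ℝ) ≤ g t - 1) (hx i).le]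
    calc Real.sqrt (∑ i, ‖(‖V t‖⁻¹ • V t - x) i‖^2)
        ≤ Real.sqrt (∑ i, (g t - 1)^2 * x i^2) :=
          Real.sqrt_le_sqrt (Finset.sum_le_sum fun i _ => hb i)
      _ = g t - 1 := by
          rw [← Finset.mul_sum, hxsum, mul_one, Real.sqrt_sq (by linarith [hg1 t])]
  · simpa using hglim1
end

section
/- Let G be a connected simple graph on n ≥ 2 vertices and let A = (a_{ijk}) be its two-steps tensor. Then there exist a real number λ > 0 and a strictly positive vector x ∈ ℝⁿ such that ∑_{j,k=1}^n a_{ijk} x_j x_k = λ x_i² for all i. Moreover, this positive eigenpair is unique up to positive scaling: if μ ∈ ℝ and y ∈ ℝⁿ is strictly positive with ∑_{j,k=1}^n a_{ijk} y_j y_k = μ y_i² for all i, then μ = λ and y = c·x for some real c > 0. (Existence and uniqueness underlying Definition 3.1 of HTEC) -/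
namespace TwoStepsAux

open Classical

variable {n : ℕ} (G : SimpleGraph (Fin n))

noncomputable def wt (i j : Fin n) : ℝ := if G.Adj i j then 1 else 0

noncomputable def rowB (x : Fin n → ℝ) (j : Fin n) : ℝ := ∑ k, wt G j k * x k

noncomputable def FF (x : Fin n → ℝ) (i : Fin n) : ℝ := ∑ j, wt G i j * (x j * rowB G x j)

noncomputable def FE (ε : ℝ) (x : Fin n → ℝ) (i : Fin n) : ℝ :=
  FF G x i + ε * (∑ j, x j) ^ 2

noncomputable def PH (ε : ℝ) (x : Fin n → ℝ) (i : Fin n) : ℝ :=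
  Real.sqrt (FE G ε x i + (x i) ^ 2)

lemma wt_nonneg (i j : Fin n) : 0 ≤ wt G i j := by
  unfold wt; split <;> norm_num

lemma wt_le_one (i j : Fin n) : wt G i j ≤ 1 := by
  unfold wt; split <;> norm_num

lemma wt_pos_of_adj {i j : Fin n} (h : G.Adj i j) : wt G i j = 1 := by
  unfold wt; simp [h]

lemma tensor_sum_eq (x : Fin n → ℝ) (i : Fin n) :
    ∑ j, ∑ k, twoStepsTensor G i j k * x j * x k = FF G x i := by
  unfold FF
  refine Finset.sum_congr rfl fun j _ => ?_
  unfold rowB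
  rw [show wt G i j * (x j * ∑ k, wt G j k * x k)
      = ∑ k, wt G i j * (x j * (wt G j k * x k)) by rw [Finset.mul_sum, Finset.mul_sum]]
  refine Finset.sum_congr rfl fun k _ => ?_
  unfold twoStepsTensor wt
  by_cases h1 : G.Adj i j <;> by_cases h2 : G.Adj j k <;> simp [h1, h2] <;> ring

lemma rowB_nonneg {x : Fin n → ℝ} (hx : ∀ i, 0 ≤ x i) (j : Fin n) : 0 ≤ rowB G x j :=
  Finset.sum_nonneg fun k _ => mul_nonneg (wt_nonneg G j k) (hx k)

lemma rowB_mono {x y : Fin n → ℝ} (hx : ∀ i, 0 ≤ x i) (hxy : ∀ i, x i ≤ y i) (j : Fin n) :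
    rowB G x j ≤ rowB G y j := by
  unfold rowB
  exact Finset.sum_le_sum fun k _ => mul_le_mul_of_nonneg_left (hxy k) (wt_nonneg G j k)

lemma FF_nonneg {x : Fin n → ℝ} (hx : ∀ i, 0 ≤ x i) (i : Fin n) : 0 ≤ FF G x i := by
  unfold FF
  exact Finset.sum_nonneg fun j _ => mul_nonneg (wt_nonneg G i j)
    (mul_nonneg (hx j) (rowB_nonneg G hx j))

lemma FF_mono {x y : Fin n → ℝ} (hx : ∀ i, 0 ≤ x i) (hxy : ∀ i, x i ≤ y i) (i : Fin n) :
    FF G x i ≤ FF G y i := by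
  unfold FF
  refine Finset.sum_le_sum fun j _ => ?_
  have hy : ∀ i, 0 ≤ y i := fun i => le_trans (hx i) (hxy i)
  refine mul_le_mul_of_nonneg_left ?_ (wt_nonneg G i j)
  exact mul_le_mul (hxy j) (rowB_mono G hx hxy j) (rowB_nonneg G hx j) (hy j)

lemma rowB_smul (c : ℝ) (x : Fin n → ℝ) (j : Fin n) :
    rowB G (fun i => c * x i) j = c * rowB G x j := by
  unfold rowB; rw [Finset.mul_sum]; exact Finset.sum_congr rfl fun k _ => by ring

lemma FF_smul (c : ℝ) (x : Fin n → ℝ) (i : Fin n) :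
    FF G (fun i => c * x i) i = c ^ 2 * FF G x i := by
  unfold FF
  rw [Finset.mul_sum]
  refine Finset.sum_congr rfl fun j _ => ?_
  rw [rowB_smul]; ring

lemma FE_smul {c : ℝ} (ε : ℝ) (x : Fin n → ℝ) (i : Fin n) :
    FE G ε (fun i => c * x i) i = c ^ 2 * FE G ε x i := by
  unfold FE
  rw [FF_smul, ← Finset.mul_sum]
  ring

lemma PH_smul {c : ℝ} (hc : 0 ≤ c) (ε : ℝ) (x : Fin n → ℝ) (i : Fin n) :
    PH G ε (fun i => c * x i) i = c * PH G ε x i := by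
  unfold PH
  rw [FE_smul]
  have : FE G ε x i + x i ^ 2 = FE G ε x i + x i ^ 2 := rfl
  rw [show c ^ 2 * FE G ε x i + (c * x i) ^ 2 = c ^ 2 * (FE G ε x i + x i ^ 2) by ring]
  rw [Real.sqrt_mul (sq_nonneg c), Real.sqrt_sq hc]

lemma cont_PH (i : Fin n) : Continuous fun p : ℝ × (Fin n → ℝ) => PH G p.1 p.2 i := by
  unfold PH FE FF rowB
  fun_prop


lemma exists_adj (hn : 2 ≤ n) (hG : G.Connected) (i : Fin n) : ∃ j, G.Adj i j := by
  have : Nontrivial (Fin n) := Fin.nontrivial_iff_two_le.mpr hn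
  obtain ⟨j, hj⟩ := exists_ne i
  obtain ⟨w⟩ := hG.preconnected i j
  cases w with
  | nil => exact absurd rfl hj.symm
  | cons h p => exact ⟨_, h⟩

lemma crossing {S : Set (Fin n)} {u v : Fin n} (hu : u ∈ S) (hv : v ∉ S)
    (w : G.Walk u v) : ∃ a b, G.Adj a b ∧ a ∈ S ∧ b ∉ S := by
  induction w with
  | nil => exact absurd hu hv
  | @cons a b c h p ih =>
    by_cases hb : b ∈ S
    · exact ih hb hv
    · exact ⟨a, b, h, hu, hb⟩

lemma closure_eq_univ (hG : G.Connected) {S : Set (Fin n)}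
    (hcl : ∀ a b, a ∈ S → G.Adj a b → b ∈ S) {u : Fin n} (hu : u ∈ S) :
    ∀ v, v ∈ S := by
  intro v
  obtain ⟨w⟩ := hG.preconnected u v
  clear hG
  induction w with
  | nil => exact hu
  | @cons a b c h p ih => exact ih (hcl a b hu h)


def Ksimp (n : ℕ) : Set (Fin n → ℝ) := {x | (∀ i, 0 ≤ x i) ∧ ∑ i, x i = 1}

lemma isClosed_Ksimp (n : ℕ) : IsClosed (Ksimp n) := by
  have h1 : IsClosed {x : Fin n → ℝ | ∀ i, 0 ≤ x i} := by
    have : {x : Fin n → ℝ | ∀ i, 0 ≤ x i} = ⋂ i, {x | 0 ≤ x i} := by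
      ext x; simp
    rw [this]
    exact isClosed_iInter fun i => isClosed_le continuous_const (continuous_apply i)
  have h2 : IsClosed {x : Fin n → ℝ | ∑ i, x i = 1} :=
    isClosed_eq (by fun_prop) continuous_const
  exact h1.inter h2

lemma mem_Icc_of_Ksimp {x : Fin n → ℝ} (hx : x ∈ Ksimp n) :
    x ∈ Set.Icc (0 : Fin n → ℝ) 1 := by
  obtain ⟨h0, h1⟩ := hx
  constructor
  · intro i; exact h0 i
  · intro i
    calc x i ≤ ∑ j, x j := Finset.single_le_sum (fun j _ => h0 j) (Finset.mem_univ i)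
    _ = 1 := h1

lemma rowB_le_one {x : Fin n → ℝ} (hx : x ∈ Ksimp n) (j : Fin n) : rowB G x j ≤ 1 := by
  unfold rowB
  calc ∑ k, wt G j k * x k ≤ ∑ k, x k :=
        Finset.sum_le_sum fun k _ => by
          have := mul_le_mul_of_nonneg_right (wt_le_one G j k) (hx.1 k)
          simpa using this
  _ = 1 := hx.2

lemma FF_le_one {x : Fin n → ℝ} (hx : x ∈ Ksimp n) (i : Fin n) : FF G x i ≤ 1 := by
  unfold FF
  calc ∑ j, wt G i j * (x j * rowB G x j) ≤ ∑ j, x j := by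
        refine Finset.sum_le_sum fun j _ => ?_
        have h1 : x j * rowB G x j ≤ x j * 1 :=
          mul_le_mul_of_nonneg_left (rowB_le_one G hx j) (hx.1 j)
        have h2 : wt G i j * (x j * rowB G x j) ≤ 1 * (x j * 1) :=
          mul_le_mul (wt_le_one G i j) h1 (mul_nonneg (hx.1 j) (rowB_nonneg G hx.1 j))
            zero_le_one
        simpa using h2
  _ = 1 := hx.2

lemma one_le_FF_one (hn : 2 ≤ n) (hG : G.Connected) (i : Fin n) :
    1 ≤ FF G (fun _ => 1) i := by
  obtain ⟨j, hj⟩ := exists_adj G hn hG i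
  unfold FF
  have hterm : (1:ℝ) ≤ wt G i j * ((1:ℝ) * rowB G (fun _ => 1) j) := by
    rw [wt_pos_of_adj G hj]
    have hr : rowB G (fun _ => 1) j = ∑ k, wt G j k := by
      unfold rowB; simp
    have : (1:ℝ) ≤ rowB G (fun _ => 1) j := by
      rw [hr]
      calc (1:ℝ) = wt G j i := (wt_pos_of_adj G hj.symm).symm
      _ ≤ ∑ k, wt G j k :=
          Finset.single_le_sum (fun k _ => wt_nonneg G j k) (Finset.mem_univ i)
    simpa using this
  calc (1:ℝ) ≤ wt G i j * (1 * rowB G (fun _ => 1) j) := hterm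
  _ ≤ ∑ j', wt G i j' * ((1:ℝ) * rowB G (fun _ => 1) j') :=
      Finset.single_le_sum (fun k _ => mul_nonneg (wt_nonneg G i k)
        (mul_nonneg zero_le_one (rowB_nonneg G (fun _ => zero_le_one) k)))
        (Finset.mem_univ j)

lemma sqrt_three_le_two : Real.sqrt 3 ≤ 2 := by
  have h := Real.sq_sqrt (by norm_num : (0:ℝ) ≤ 3)
  nlinarith [Real.sqrt_nonneg 3]

lemma PH_le_two {x : Fin n → ℝ} (hx : x ∈ Ksimp n) {ε : ℝ} (hε0 : 0 ≤ ε) (hε1 : ε ≤ 1)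
    (i : Fin n) : PH G ε x i ≤ 2 := by
  unfold PH FE
  have harg : FF G x i + ε * (∑ j, x j) ^ 2 + x i ^ 2 ≤ 3 := by
    have h1 := FF_le_one G hx i
    have h2 : ε * (∑ j, x j) ^ 2 ≤ 1 := by rw [hx.2]; simpa using hε1
    have h3 : x i ^ 2 ≤ 1 := by
      have := (mem_Icc_of_Ksimp hx)
      have h4 : 0 ≤ x i := this.1 i
      have h5 : x i ≤ 1 := this.2 i
      nlinarith
    linarith
  calc Real.sqrt (FF G x i + ε * (∑ j, x j) ^ 2 + x i ^ 2) ≤ Real.sqrt 3 :=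
        Real.sqrt_le_sqrt harg
  _ ≤ 2 := sqrt_three_le_two

lemma lam_le_bound (hn : 2 ≤ n) {x : Fin n → ℝ} (hx : x ∈ Ksimp n) {lam ε : ℝ}
    (hl : 0 ≤ lam) (hε0 : 0 ≤ ε) (hε1 : ε ≤ 1)
    (h : ∀ i, lam * x i ≤ PH G ε x i) : lam ≤ 2 * n := by
  have hn0 : 0 < n := by omega
  have hex : ∃ i, (1:ℝ)/n ≤ x i := by
    by_contra hc
    push_neg at hc
    have hne : (Finset.univ : Finset (Fin n)).Nonempty := by
      rw [Finset.univ_nonempty_iff]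
      exact Fin.pos_iff_nonempty.mp hn0
    have hsum : ∑ i, x i < ∑ _i : Fin n, (1:ℝ)/n :=
      Finset.sum_lt_sum_of_nonempty hne (fun i _ => hc i)
    have hconst : ∑ _i : Fin n, (1:ℝ)/n = 1 := by
      rw [Finset.sum_const, nsmul_eq_mul]
      field_simp
      simp
    rw [hx.2, hconst] at hsum
    exact lt_irrefl 1 hsum
  obtain ⟨i, hi⟩ := hex
  have h1 : lam * (1/n) ≤ 2 := by
    calc lam * (1/n) ≤ lam * x i := mul_le_mul_of_nonneg_left hi hl
    _ ≤ PH G ε x i := h i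
    _ ≤ 2 := PH_le_two G hx hε0 hε1 i
  have hnpos : (0:ℝ) < n := by exact_mod_cast hn0
  rw [div_eq_mul_inv, one_mul] at h1
  calc lam = lam * (n:ℝ)⁻¹ * n := by field_simp
  _ ≤ 2 * n := mul_le_mul_of_nonneg_right h1 hnpos.le


lemma exists_eigen_eps (hn : 2 ≤ n) (hG : G.Connected) {ε : ℝ} (hε : 0 < ε) (hε1 : ε ≤ 1) :
    ∃ lam x, Real.sqrt 2 ≤ lam ∧ x ∈ Ksimp n ∧ ∀ i, PH G ε x i = lam * x i := by
  have hn0 : 0 < n := by omega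
  have hnR : (0:ℝ) < n := by exact_mod_cast hn0
  have huniv : (Finset.univ : Finset (Fin n)).Nonempty := by
    rw [Finset.univ_nonempty_iff]; exact Fin.pos_iff_nonempty.mp hn0
  set C : Set (ℝ × (Fin n → ℝ)) :=
    {p | p.2 ∈ Ksimp n ∧ 0 ≤ p.1 ∧ ∀ i, p.1 * p.2 i ≤ PH G ε p.2 i} with hC
  have hCclosed : IsClosed C := by
    have h1 : IsClosed {p : ℝ × (Fin n → ℝ) | p.2 ∈ Ksimp n} :=
      (isClosed_Ksimp n).preimage continuous_snd
    have h2 : IsClosed {p : ℝ × (Fin n → ℝ) | 0 ≤ p.1} :=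
      isClosed_le continuous_const continuous_fst
    have h3 : IsClosed {p : ℝ × (Fin n → ℝ) | ∀ i, p.1 * p.2 i ≤ PH G ε p.2 i} := by
      have he : {p : ℝ × (Fin n → ℝ) | ∀ i, p.1 * p.2 i ≤ PH G ε p.2 i}
          = ⋂ i, {p : ℝ × (Fin n → ℝ) | p.1 * p.2 i ≤ PH G ε p.2 i} := by
        ext p; simp
      rw [he]
      refine isClosed_iInter fun i => isClosed_le (by fun_prop) ?_
      exact (cont_PH G i).comp
        (by fun_prop : Continuous fun p : ℝ × (Fin n → ℝ) => (ε, p.2))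
    exact h1.inter (h2.inter h3)
  have hCsub : C ⊆ Set.Icc (0:ℝ) (2*n) ×ˢ Set.Icc (0 : Fin n → ℝ) 1 := by
    rintro ⟨l, y⟩ ⟨hyK, hl0, hineq⟩
    exact ⟨⟨hl0, lam_le_bound G hn hyK hl0 hε.le hε1 hineq⟩, mem_Icc_of_Ksimp hyK⟩
  have hCcomp : IsCompact C :=
    IsCompact.of_isClosed_subset (isCompact_Icc.prod isCompact_Icc) hCclosed hCsub
  set u0 : Fin n → ℝ := fun _ => (1:ℝ)/n with hu0
  have hu0K : u0 ∈ Ksimp n := by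
    constructor
    · intro i; positivity
    · simp only [hu0, Finset.sum_const, nsmul_eq_mul, Finset.card_univ, Fintype.card_fin]
      field_simp
  have hFFu0 : ∀ i, ((1:ℝ)/n)^2 ≤ FF G u0 i := by
    intro i
    have h := FF_smul G (1/n) (fun _ => 1) i
    simp only [mul_one] at h
    have h1 := one_le_FF_one G hn hG i
    calc ((1:ℝ)/n)^2 = (1/n)^2 * 1 := by ring
    _ ≤ (1/n)^2 * FF G (fun _ => 1) i := by nlinarith
    _ = FF G u0 i := h.symm
  have hmemC : (Real.sqrt 2, u0) ∈ C := by
    refine ⟨hu0K, Real.sqrt_nonneg 2, fun i => ?_⟩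
    show Real.sqrt 2 * u0 i ≤ PH G ε u0 i
    unfold PH FE
    have harg : 2 * ((1:ℝ)/n)^2 ≤ FF G u0 i + ε * (∑ j, u0 j) ^ 2 + u0 i ^ 2 := by
      have h1 := hFFu0 i
      have h2 : 0 ≤ ε * (∑ j, u0 j)^2 := by positivity
      have h3 : u0 i ^ 2 = ((1:ℝ)/n)^2 := rfl
      linarith
    calc Real.sqrt 2 * u0 i = Real.sqrt (2 * ((1:ℝ)/n)^2) := by
          rw [Real.sqrt_mul (by norm_num : (0:ℝ) ≤ 2), Real.sqrt_sq (by positivity)]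
    _ ≤ _ := Real.sqrt_le_sqrt harg
  obtain ⟨p, hpC, hpmax⟩ := hCcomp.exists_isMaxOn ⟨_, hmemC⟩ continuous_fst.continuousOn
  obtain ⟨lam, x⟩ := p
  have hlam2 : Real.sqrt 2 ≤ lam := hpmax hmemC
  have hxK : x ∈ Ksimp n := hpC.1
  have hlam0 : 0 ≤ lam := hpC.2.1
  have hle : ∀ i, lam * x i ≤ PH G ε x i := hpC.2.2
  have hxnn := hxK.1
  refine ⟨lam, x, hlam2, hxK, ?_⟩
  by_contra hcon
  push_neg at hcon
  obtain ⟨i0, hi0⟩ := hcon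
  have hi0' : lam * x i0 < PH G ε x i0 := lt_of_le_of_ne (hle i0) (Ne.symm hi0)
  set u : Fin n → ℝ := fun i => PH G ε x i with hu
  have hupos : ∀ i, 0 < u i := by
    intro i
    show 0 < PH G ε x i
    unfold PH FE
    apply Real.sqrt_pos.mpr
    have h1 : 0 ≤ FF G x i := FF_nonneg G hxnn i
    have h2 : 0 < ε * (∑ j, x j)^2 := by rw [hxK.2]; simpa using hε
    nlinarith [sq_nonneg (x i)]
  have hsum : ∑ j, lam * x j < ∑ j, u j :=
    Finset.sum_lt_sum (fun j _ => hle j) ⟨i0, Finset.mem_univ i0, hi0'⟩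
  have key : ∀ i, lam * u i < PH G ε u i := by
    intro i
    have hPHsm : PH G ε (fun j => lam * x j) i = lam * PH G ε x i := PH_smul G hlam0 ε x i
    have hlxnn : ∀ j, 0 ≤ lam * x j := fun j => mul_nonneg hlam0 (hxnn j)
    have hmono : FF G (fun j => lam * x j) i ≤ FF G u i := FF_mono G hlxnn hle i
    have h2 : ε * (∑ j, lam * x j)^2 < ε * (∑ j, u j)^2 := by
      apply mul_lt_mul_of_pos_left _ hε
      have h0 : 0 ≤ ∑ j, lam * x j := Finset.sum_nonneg fun j _ => hlxnn j
      exact pow_lt_pow_left₀ hsum h0 two_ne_zero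
    have h3 : (lam * x i)^2 ≤ (u i)^2 := pow_le_pow_left₀ (hlxnn i) (hle i) 2
    have hlt : FE G ε (fun j => lam * x j) i + (lam * x i)^2 < FE G ε u i + (u i)^2 := by
      unfold FE; linarith
    have hnn : 0 ≤ FE G ε (fun j => lam * x j) i + (lam * x i)^2 := by
      unfold FE
      have := FF_nonneg G hlxnn i
      positivity
    have hs := Real.sqrt_lt_sqrt hnn hlt
    have : PH G ε (fun j => lam * x j) i < PH G ε u i := hs
    rw [hPHsm] at this
    exact this
  set s : ℝ := ∑ j, u j with hs
  have hspos : 0 < s := Finset.sum_pos (fun j _ => hupos j) huniv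
  set z : Fin n → ℝ := fun i => s⁻¹ * u i with hz
  have hzpos : ∀ i, 0 < z i := fun i => mul_pos (inv_pos.mpr hspos) (hupos i)
  have hzK : z ∈ Ksimp n := by
    constructor
    · intro i; exact (hzpos i).le
    · show ∑ i, s⁻¹ * u i = 1
      rw [← Finset.mul_sum, ← hs]
      field_simp
  have hkeyz : ∀ i, lam * z i < PH G ε z i := by
    intro i
    have h := PH_smul G (inv_nonneg.mpr hspos.le) ε u i
    have : PH G ε z i = s⁻¹ * PH G ε u i := h
    rw [this]
    have := key i
    calc lam * z i = s⁻¹ * (lam * u i) := by show lam * (s⁻¹ * u i) = _; ring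
    _ < s⁻¹ * PH G ε u i := by
        apply mul_lt_mul_of_pos_left (key i) (inv_pos.mpr hspos)
  set lam' : ℝ := Finset.univ.inf' huniv (fun i => PH G ε z i / z i) with hlam'
  have hlt' : lam < lam' := by
    rw [hlam', Finset.lt_inf'_iff]
    intro i _
    rw [lt_div_iff₀ (hzpos i)]
    exact hkeyz i
  have hC' : (lam', z) ∈ C := by
    refine ⟨hzK, by linarith [Real.sqrt_nonneg 2], fun i => ?_⟩
    have h := Finset.inf'_le (fun i => PH G ε z i / z i) (Finset.mem_univ i)
    calc lam' * z i ≤ (PH G ε z i / z i) * z i :=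
          mul_le_mul_of_nonneg_right h (hzpos i).le
    _ = PH G ε z i := by rw [div_mul_cancel₀ _ (hzpos i).ne']
  have h2 : lam' ≤ lam := hpmax hC'
  linarith

lemma isCompact_Ksimp (n : ℕ) : IsCompact (Ksimp n) :=
  IsCompact.of_isClosed_subset isCompact_Icc (isClosed_Ksimp n)
    (fun _ hx => mem_Icc_of_Ksimp hx)

lemma exists_positive_eigenpair (hn : 2 ≤ n) (hG : G.Connected) :
    ∃ lam x, 0 < lam ∧ (∀ i, 0 < x i) ∧ ∀ i, FF G x i = lam * x i ^ 2 := by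
  have hn0 : 0 < n := by omega
  have huniv : (Finset.univ : Finset (Fin n)).Nonempty := by
    rw [Finset.univ_nonempty_iff]; exact Fin.pos_iff_nonempty.mp hn0
  have H : ∀ m : ℕ, ∃ lam x, Real.sqrt 2 ≤ lam ∧ x ∈ Ksimp n ∧
      ∀ i, PH G (1/(m+1)) x i = lam * x i := by
    intro m
    refine exists_eigen_eps G hn hG ?_ ?_
    · positivity
    · rw [div_le_one (by positivity)]
      have : (0:ℝ) ≤ m := Nat.cast_nonneg m
      linarith
  choose lms xs h1 h2 h3 using H
  have hbd : ∀ m, lms m ≤ 2 * n := by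
    intro m
    refine lam_le_bound G hn (h2 m) (le_trans (Real.sqrt_nonneg 2) (h1 m)) (by positivity) ?_
      (fun i => le_of_eq (h3 m i).symm)
    rw [div_le_one (by positivity)]
    have : (0:ℝ) ≤ m := Nat.cast_nonneg m
    linarith
  set T : Set (ℝ × (Fin n → ℝ)) := Set.Icc (Real.sqrt 2) (2*n) ×ˢ Ksimp n with hT
  have hTcomp : IsCompact T := isCompact_Icc.prod (isCompact_Ksimp n)
  have hmem : ∀ m, (lms m, xs m) ∈ T := fun m => ⟨⟨h1 m, hbd m⟩, h2 m⟩
  obtain ⟨q, hqT, φ, hφ, hconv⟩ := hTcomp.tendsto_subseq hmem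
  obtain ⟨lamstar, xstar⟩ := q
  have hconvl : Filter.Tendsto (fun m => lms (φ m)) Filter.atTop (nhds lamstar) := by
    have := (continuous_fst.tendsto (lamstar, xstar)).comp hconv
    simpa [Function.comp_def] using this
  have hconvx : Filter.Tendsto (fun m => xs (φ m)) Filter.atTop (nhds xstar) := by
    have := (continuous_snd.tendsto (lamstar, xstar)).comp hconv
    simpa [Function.comp_def] using this
  have hconve : Filter.Tendsto (fun m : ℕ => 1/((φ m : ℝ)+1)) Filter.atTop (nhds 0) := by
    have := (tendsto_one_div_add_atTop_nhds_zero_nat (𝕜 := ℝ)).comp hφ.tendsto_atTop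
    simpa [Function.comp_def] using this
  have heq0 : ∀ i, PH G 0 xstar i = lamstar * xstar i := by
    intro i
    have hL : Filter.Tendsto (fun m => PH G (1/((φ m : ℝ)+1)) (xs (φ m)) i)
        Filter.atTop (nhds (PH G 0 xstar i)) := by
      have := ((cont_PH G i).tendsto (0, xstar)).comp (hconve.prodMk_nhds hconvx)
      simpa [Function.comp_def] using this
    have hxi : Filter.Tendsto (fun m => xs (φ m) i) Filter.atTop (nhds (xstar i)) := by
      have := ((continuous_apply i).tendsto xstar).comp hconvx
      simpa [Function.comp_def] using this
    have hR : Filter.Tendsto (fun m => lms (φ m) * xs (φ m) i)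
        Filter.atTop (nhds (lamstar * xstar i)) := hconvl.mul hxi
    have heqm : (fun m => PH G (1/((φ m : ℝ)+1)) (xs (φ m)) i)
        = fun m => lms (φ m) * xs (φ m) i := by
      funext m
      have := h3 (φ m) i
      push_cast at this ⊢
      exact this
    rw [heqm] at hL
    exact tendsto_nhds_unique hL hR
  have hxK : xstar ∈ Ksimp n := hqT.2
  have hlam2 : Real.sqrt 2 ≤ lamstar := hqT.1.1
  have hls : 2 ≤ lamstar ^ 2 := by
    have h := pow_le_pow_left₀ (Real.sqrt_nonneg 2) hlam2 2
    rwa [Real.sq_sqrt (by norm_num : (0:ℝ) ≤ 2)] at h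
  set lam : ℝ := lamstar ^ 2 - 1 with hlam
  have hlampos : 0 < lam := by rw [hlam]; linarith
  have heig : ∀ i, FF G xstar i = lam * xstar i ^ 2 := by
    intro i
    have h := heq0 i
    have harg : 0 ≤ FE G 0 xstar i + xstar i ^ 2 := by
      unfold FE
      have := FF_nonneg G hxK.1 i
      positivity
    have hsq : FE G 0 xstar i + xstar i ^ 2 = (lamstar * xstar i)^2 := by
      rw [← h]
      unfold PH
      rw [Real.sq_sqrt harg]
    unfold FE at hsq
    simp only [zero_mul, add_zero] at hsq
    rw [hlam]
    nlinarith [hsq]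
  -- positivity of xstar
  have hxnn := hxK.1
  have hpos : ∀ i, 0 < xstar i := by
    have hSne : ∃ a, 0 < xstar a := by
      by_contra hc
      push_neg at hc
      have : ∑ i, xstar i ≤ 0 :=
        Finset.sum_nonpos fun i _ => hc i
      rw [hxK.2] at this
      linarith
    obtain ⟨a, ha⟩ := hSne
    -- each positive vertex has a positive neighbor
    have hnbr : ∀ j, 0 < xstar j → ∃ j', G.Adj j j' ∧ 0 < xstar j' := by
      intro j hj
      have hFFj : 0 < FF G xstar j := by
        rw [heig j]
        exact mul_pos hlampos (pow_pos hj 2)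
      have hterm : ∃ j', 0 < wt G j j' * (xstar j' * rowB G xstar j') := by
        by_contra hc
        push_neg at hc
        have : FF G xstar j ≤ 0 := by
          unfold FF
          exact Finset.sum_nonpos fun j' _ => hc j'
        linarith
      obtain ⟨j', hj'⟩ := hterm
      have hadj : G.Adj j j' := by
        by_contra hna
        unfold wt at hj'
        rw [if_neg hna] at hj'
        simp at hj'
      refine ⟨j', hadj, ?_⟩
      rcases (hxnn j').eq_or_lt with h | h
      · rw [← h] at hj'; simp at hj'
      · exact h
    have hrow : ∀ j, 0 < xstar j → 0 < rowB G xstar j := by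
      intro j hj
      obtain ⟨j', hadj, hj'⟩ := hnbr j hj
      have hle : wt G j j' * xstar j' ≤ rowB G xstar j := by
        unfold rowB
        exact Finset.single_le_sum
          (fun k _ => mul_nonneg (wt_nonneg G j k) (hxnn k)) (Finset.mem_univ j')
      rw [wt_pos_of_adj G hadj, one_mul] at hle
      linarith
    intro b
    by_contra hb
    have hbS : b ∉ {i | 0 < xstar i} := hb
    obtain ⟨w⟩ := hG.preconnected a b
    obtain ⟨a', b', hadj, ha', hb'⟩ := crossing G (show a ∈ {i | 0 < xstar i} from ha) hbS w
    have hxb' : xstar b' = 0 := le_antisymm (not_lt.mp hb') (hxnn b')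
    have hFFb' : FF G xstar b' = 0 := by
      rw [heig b', hxb']
      ring
    have hterm : wt G b' a' * (xstar a' * rowB G xstar a') ≤ FF G xstar b' := by
      unfold FF
      exact Finset.single_le_sum
        (fun k _ => mul_nonneg (wt_nonneg G b' k)
          (mul_nonneg (hxnn k) (rowB_nonneg G hxnn k))) (Finset.mem_univ a')
    rw [wt_pos_of_adj G hadj.symm, one_mul, hFFb'] at hterm
    have : 0 < xstar a' * rowB G xstar a' := mul_pos ha' (hrow a' ha')
    linarith
  exact ⟨lam, xstar, hlampos, hpos, heig⟩


lemma rowB_pos_of_adj {x : Fin n → ℝ} (hxnn : ∀ i, 0 ≤ x i) {a b : Fin n}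
    (hadj : G.Adj a b) (hb : 0 < x b) : 0 < rowB G x a := by
  have hle : wt G a b * x b ≤ rowB G x a := by
    unfold rowB
    exact Finset.single_le_sum (fun k _ => mul_nonneg (wt_nonneg G a k) (hxnn k))
      (Finset.mem_univ b)
  rw [wt_pos_of_adj G hadj, one_mul] at hle
  linarith

lemma mu_le_lam (hn : 2 ≤ n) {lam mu : ℝ} {x y : Fin n → ℝ}
    (hx : ∀ i, 0 < x i) (hy : ∀ i, 0 < y i)
    (hex : ∀ i, FF G x i = lam * x i ^ 2) (hey : ∀ i, FF G y i = mu * y i ^ 2) :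
    mu ≤ lam := by
  have hn0 : 0 < n := by omega
  have huniv : (Finset.univ : Finset (Fin n)).Nonempty := by
    rw [Finset.univ_nonempty_iff]; exact Fin.pos_iff_nonempty.mp hn0
  obtain ⟨i0, -, hmax⟩ := Finset.exists_max_image Finset.univ (fun i => y i / x i) huniv
  set t : ℝ := y i0 / x i0 with ht
  have htpos : 0 < t := div_pos (hy i0) (hx i0)
  have hyx : ∀ i, y i ≤ t * x i := by
    intro i
    have h := hmax i (Finset.mem_univ i)
    exact (div_le_iff₀ (hx i)).mp h
  have hFle : FF G y i0 ≤ FF G (fun i => t * x i) i0 :=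
    FF_mono G (fun i => (hy i).le) hyx i0
  have hkey : mu * y i0 ^ 2 ≤ t ^ 2 * (lam * x i0 ^ 2) := by
    rw [← hex i0, ← hey i0, ← FF_smul]
    exact hFle
  have hyi0 : y i0 = t * x i0 := by rw [ht, div_mul_cancel₀ _ (hx i0).ne']
  rw [hyi0] at hkey
  have hp : 0 < (t * x i0) ^ 2 := pow_pos (mul_pos htpos (hx i0)) 2
  nlinarith

lemma eigvec_unique (hG : G.Connected) (hn : 2 ≤ n) {lam : ℝ} {x y : Fin n → ℝ}
    (hx : ∀ i, 0 < x i) (hy : ∀ i, 0 < y i)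
    (hex : ∀ i, FF G x i = lam * x i ^ 2) (hey : ∀ i, FF G y i = lam * y i ^ 2) :
    ∃ c : ℝ, 0 < c ∧ ∀ i, y i = c * x i := by
  have hn0 : 0 < n := by omega
  have huniv : (Finset.univ : Finset (Fin n)).Nonempty := by
    rw [Finset.univ_nonempty_iff]; exact Fin.pos_iff_nonempty.mp hn0
  obtain ⟨i0, -, hmax⟩ := Finset.exists_max_image Finset.univ (fun i => y i / x i) huniv
  set t : ℝ := y i0 / x i0 with ht
  have htpos : 0 < t := div_pos (hy i0) (hx i0)
  have hyx : ∀ i, y i ≤ t * x i := by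
    intro i
    exact (div_le_iff₀ (hx i)).mp (hmax i (Finset.mem_univ i))
  have hxnn : ∀ i, 0 ≤ x i := fun i => (hx i).le
  have hynn : ∀ i, 0 ≤ y i := fun i => (hy i).le
  have htx : ∀ i, 0 ≤ t * x i := fun i => mul_nonneg htpos.le (hxnn i)
  set S : Set (Fin n) := {i | y i = t * x i} with hS
  have hi0S : i0 ∈ S := by
    show y i0 = t * x i0
    rw [ht, div_mul_cancel₀ _ (hx i0).ne']
  have hcl : ∀ a b, a ∈ S → G.Adj a b → b ∈ S := by
    intro a b haS hadj
    have hya : y a = t * x a := haS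
    have hsum_eq : FF G y a = FF G (fun i => t * x i) a := by
      rw [hey a, FF_smul, hex a, hya]
      ring
    have hterm_le : ∀ j, wt G a j * (y j * rowB G y j)
        ≤ wt G a j * ((t * x j) * rowB G (fun i => t * x i) j) := fun j =>
      mul_le_mul_of_nonneg_left
        (mul_le_mul (hyx j) (rowB_mono G hynn hyx j) (rowB_nonneg G hynn j) (htx j))
        (wt_nonneg G a j)
    have hterm_eq : wt G a b * (y b * rowB G y b)
        = wt G a b * ((t * x b) * rowB G (fun i => t * x i) b) := by
      by_contra hne
      have hltb := lt_of_le_of_ne (hterm_le b) hne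
      have hlt : FF G y a < FF G (fun i => t * x i) a := by
        unfold FF
        exact Finset.sum_lt_sum (fun j _ => hterm_le j) ⟨b, Finset.mem_univ b, hltb⟩
      rw [hsum_eq] at hlt
      exact lt_irrefl _ hlt
    rw [wt_pos_of_adj G hadj] at hterm_eq
    simp only [one_mul] at hterm_eq
    show y b = t * x b
    by_contra hbS
    have hlt : y b < t * x b := lt_of_le_of_ne (hyx b) hbS
    have hrowxb : 0 < rowB G x b := rowB_pos_of_adj G hxnn hadj.symm (hx a)
    have hrowtx : rowB G (fun i => t * x i) b = t * rowB G x b := rowB_smul G t x b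
    have hlt2 : y b * rowB G y b < (t * x b) * rowB G (fun i => t * x i) b := by
      calc y b * rowB G y b ≤ y b * rowB G (fun i => t * x i) b :=
            mul_le_mul_of_nonneg_left (rowB_mono G hynn hyx b) (hynn b)
      _ < (t * x b) * rowB G (fun i => t * x i) b := by
          apply mul_lt_mul_of_pos_right hlt
          rw [hrowtx]
          exact mul_pos htpos hrowxb
    rw [hterm_eq] at hlt2
    exact lt_irrefl _ hlt2
  have hall := closure_eq_univ G hG hcl hi0S
  exact ⟨t, htpos, fun i => hall i⟩

end TwoStepsAux

/-- For a connected simple graph on `n ≥ 2` vertices, the two-steps tensor has a positive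
eigenpair `(λ, x)`, and this positive eigenpair is unique up to positive scaling of the
eigenvector. -/
theorem twoStepsTensor_positive_eigenpair {n : ℕ} (hn : 2 ≤ n)
    (G : SimpleGraph (Fin n)) (hG : G.Connected) :
    ∃ (lam : ℝ) (x : Fin n → ℝ), 0 < lam ∧ (∀ i, 0 < x i) ∧
      (∀ i, ∑ j, ∑ k, twoStepsTensor G i j k * x j * x k = lam * (x i) ^ 2) ∧
      ∀ (mu : ℝ) (y : Fin n → ℝ), (∀ i, 0 < y i) →
        (∀ i, ∑ j, ∑ k, twoStepsTensor G i j k * y j * y k = mu * (y i) ^ 2) →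
        mu = lam ∧ ∃ c : ℝ, 0 < c ∧ y = c • x := by
  obtain ⟨lam, x, hlam, hx, heig⟩ := TwoStepsAux.exists_positive_eigenpair G hn hG
  refine ⟨lam, x, hlam, hx, ?_, ?_⟩
  · intro i
    rw [TwoStepsAux.tensor_sum_eq]
    exact heig i
  · intro mu y hy hmu
    have hey : ∀ i, TwoStepsAux.FF G y i = mu * y i ^ 2 := by
      intro i
      rw [← TwoStepsAux.tensor_sum_eq]
      exact hmu i
    have h1 : mu ≤ lam := TwoStepsAux.mu_le_lam G hn hx hy heig hey
    have h2 : lam ≤ mu := TwoStepsAux.mu_le_lam G hn hy hx hey heig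
    have hmeq : mu = lam := le_antisymm h1 h2
    rw [hmeq] at hey
    obtain ⟨c, hc, hyc⟩ := TwoStepsAux.eigvec_unique G hG hn hx hy heig hey
    refine ⟨hmeq, c, hc, funext fun i => ?_⟩
    rw [Pi.smul_apply, smul_eq_mul]
    exact hyc i
end
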